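/- arXiv:2412.04309 — 13 statements merged into one kernel-verified Lean document; each statement's English description precedes it below -/
import Mathlib

section
/- Let P = (tn, fp, fn, tp) be a two-class classification performance and let P' = (fp, tn, tp, fn) be the performance obtained from P by the operation that changes the predicted class. For any a, b ∈ [0,1], if the canonical ranking score R_{a,b} is defined at P' (i.e., its denominator at P' is nonzero), then R_{b,a} is defined at P and R_{a,b}(P') = 1 − R_{b,a}(P). -/
/-- Canonical ranking score `R_{a,b}` of a performance `(tn, fp, fn, tp)`. -/
noncomputable def Rab (a b tn fp fn tp : ℝ) : ℝ :=
  ((1 - a) * tn + a * tp) / ((1 - a) * tn + (1 - b) * fp + b * fn + a * tp)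

/-- Denominator of the canonical ranking score `R_{a,b}`. -/
def RabDen (a b tn fp fn tp : ℝ) : ℝ :=
  (1 - a) * tn + (1 - b) * fp + b * fn + a * tp

/-- Changing the predicted class maps `(tn, fp, fn, tp)` to `(fp, tn, tp, fn)`;
if `R_{a,b}` is defined at the new performance, then `R_{b,a}` is defined at the
original one and `R_{a,b}(P') = 1 - R_{b,a}(P)`. -/
theorem rab_changePredictedClass
    (tn fp fn tp : ℝ) (htn : 0 ≤ tn) (hfp : 0 ≤ fp) (hfn : 0 ≤ fn) (htp : 0 ≤ tp)
    (hsum : tn + fp + fn + tp = 1)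
    (a b : ℝ) (ha : a ∈ Set.Icc (0:ℝ) 1) (hb : b ∈ Set.Icc (0:ℝ) 1)
    (hden : RabDen a b fp tn tp fn ≠ 0) :
    RabDen b a tn fp fn tp ≠ 0 ∧
      Rab a b fp tn tp fn = 1 - Rab b a tn fp fn tp := by
  have hd : RabDen b a tn fp fn tp = RabDen a b fp tn tp fn := by
    simp [RabDen]; ring
  have hD : RabDen a b fp tn tp fn ≠ 0 := hden
  refine ⟨hd ▸ hD, ?_⟩
  have hD' : (1 - a) * fp + (1 - b) * tn + b * tp + a * fn ≠ 0 := by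
    simpa [RabDen] using hD
  have hD'' : (1 - b) * tn + (1 - a) * fp + a * fn + b * tp ≠ 0 := by
    intro h; apply hD'; linarith
  rw [Rab, Rab, eq_sub_iff_add_eq, div_add_div _ _ hD' hD'', div_eq_one_iff_eq (mul_ne_zero hD' hD'')]
  ring
end

section
/- Let P = (tn, fp, fn, tp) be a two-class classification performance and let P' = (fn, tp, tn, fp) be the performance obtained from P by the operation that changes the ground-truth class. For any a, b ∈ [0,1], if the canonical ranking score R_{a,b} is defined at P' (i.e., its denominator at P' is nonzero), then R_{1−b,1−a} is defined at P and R_{a,b}(P') = 1 − R_{1−b,1−a}(P). -/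
/-- Changing the ground-truth class maps `(tn, fp, fn, tp)` to `(fn, tp, tn, fp)`;
if `R_{a,b}` is defined at the new performance, then `R_{1-b,1-a}` is defined at
the original one and `R_{a,b}(P') = 1 - R_{1-b,1-a}(P)`. -/
theorem rab_changeGroundtruthClass
    (tn fp fn tp : ℝ) (htn : 0 ≤ tn) (hfp : 0 ≤ fp) (hfn : 0 ≤ fn) (htp : 0 ≤ tp)
    (hsum : tn + fp + fn + tp = 1)
    (a b : ℝ) (ha : a ∈ Set.Icc (0:ℝ) 1) (hb : b ∈ Set.Icc (0:ℝ) 1)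
    (hden : RabDen a b fn tp tn fp ≠ 0) :
    RabDen (1 - b) (1 - a) tn fp fn tp ≠ 0 ∧
      Rab a b fn tp tn fp = 1 - Rab (1 - b) (1 - a) tn fp fn tp := by
  have hEq : RabDen (1 - b) (1 - a) tn fp fn tp = RabDen a b fn tp tn fp := by
    unfold RabDen; ring
  refine ⟨hEq ▸ hden, ?_⟩
  unfold Rab RabDen at *
  rw [eq_sub_iff_add_eq, div_add_div _ _ hden (hEq ▸ hden), div_eq_one_iff_eq (by
    intro h; exact hden (by nlinarith [hEq ▸ hden]))]
  ring
end

section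
/- Let I = (i_tn, i_fp, i_fn, i_tp) be an importance and k > 0 a real number, and let I' = (k·i_tn, i_fp, i_fn, k·i_tp) be the importance obtained by multiplying both i_tn and i_tp by k. Then for every performance P at which R_I is defined, R_{I'} is defined at P and R_{I'}(P) = k·R_I(P) / ((k−1)·R_I(P) + 1); consequently, for any two performances P₁, P₂ at which R_I is defined, R_{I'}(P₁) ≤ R_{I'}(P₂) if and only if R_I(P₁) ≤ R_I(P₂). The same order-preservation conclusion holds for the importance I'' = (i_tn, k·i_fp, k·i_fn, i_tp), which satisfies R_{I''}(P) = R_I(P) / (R_I(P) + k·(1 − R_I(P))). -/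
/-!
Write `N = itn * tn + itp * tp` and `F = ifp * fp + ifn * fn`, so that `R_I = N / (N + F)`
with `N, F ≥ 0`. Scaling `itn, itp` by `k` replaces `N` by `k * N`, scaling `ifp, ifn` replaces
`F` by `k * F`, and both value formulas are identities of rational functions of `N / (N + F)`.
For the orderings, `N₁ / (N₁ + F₁) ≤ N₂ / (N₂ + F₂)` is equivalent to `N₁ * F₂ ≤ N₂ * F₁`, and
either scaling multiplies both sides of the latter by `k > 0`.
-/

/-- Ranking score `R_I` of a performance `(tn, fp, fn, tp)` for the importance
`I = (itn, ifp, ifn, itp)`. -/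
noncomputable def RI (itn ifp ifn itp tn fp fn tp : ℝ) : ℝ :=
  (itn * tn + itp * tp) / (itn * tn + ifp * fp + ifn * fn + itp * tp)

/-- Denominator of the ranking score `R_I`. -/
def RIDen (itn ifp ifn itp tn fp fn tp : ℝ) : ℝ :=
  itn * tn + ifp * fp + ifn * fn + itp * tp

def RINum (itn itp tn tp : ℝ) : ℝ :=
  itn * tn + itp * tp

def RIErr (ifp ifn fp fn : ℝ) : ℝ :=
  ifp * fp + ifn * fn

section Weights

variable {itn ifp ifn itp tn fp fn tp : ℝ}

theorem RINum_nonneg (hitn : 0 ≤ itn) (hitp : 0 ≤ itp) (htn : 0 ≤ tn) (htp : 0 ≤ tp) :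
    0 ≤ RINum itn itp tn tp :=
  add_nonneg (mul_nonneg hitn htn) (mul_nonneg hitp htp)

theorem RIErr_nonneg (hifp : 0 ≤ ifp) (hifn : 0 ≤ ifn) (hfp : 0 ≤ fp) (hfn : 0 ≤ fn) :
    0 ≤ RIErr ifp ifn fp fn :=
  add_nonneg (mul_nonneg hifp hfp) (mul_nonneg hifn hfn)

variable (itn ifp ifn itp tn fp fn tp)

theorem RINum_mul (k : ℝ) : RINum (k * itn) (k * itp) tn tp = k * RINum itn itp tn tp := by
  unfold RINum; ring

theorem RIErr_mul (k : ℝ) : RIErr (k * ifp) (k * ifn) fp fn = k * RIErr ifp ifn fp fn := by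
  unfold RIErr; ring

theorem RIDen_eq :
    RIDen itn ifp ifn itp tn fp fn tp = RINum itn itp tn tp + RIErr ifp ifn fp fn := by
  unfold RIDen RINum RIErr; ring

theorem RI_eq : RI itn ifp ifn itp tn fp fn tp =
    RINum itn itp tn tp / (RINum itn itp tn tp + RIErr ifp ifn fp fn) := by
  rw [← RIDen_eq]; rfl

end Weights

section Fractions

variable {a b a₁ b₁ a₂ b₂ k : ℝ}

theorem mul_add_pos (hk : 0 < k) (ha : 0 ≤ a) (hb : 0 ≤ b) (hab : a + b ≠ 0) : 0 < k * a + b := by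
  rcases ha.eq_or_lt with rfl | ha
  · simpa using (add_nonneg le_rfl hb).lt_of_ne' hab
  · exact add_pos_of_pos_of_nonneg (mul_pos hk ha) hb

theorem add_mul_pos (hk : 0 < k) (ha : 0 ≤ a) (hb : 0 ≤ b) (hab : a + b ≠ 0) : 0 < a + k * b := by
  rw [add_comm] at hab ⊢
  exact mul_add_pos hk hb ha hab

theorem div_add_le_div_add_iff (h₁ : 0 < a₁ + b₁) (h₂ : 0 < a₂ + b₂) :
    a₁ / (a₁ + b₁) ≤ a₂ / (a₂ + b₂) ↔ a₁ * b₂ ≤ a₂ * b₁ := by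
  rw [div_le_div_iff₀ h₁ h₂, mul_add, mul_add, mul_comm a₁ a₂, add_le_add_iff_left]

theorem mul_div_mul_add_eq (hab : a + b ≠ 0) :
    k * a / (k * a + b) = k * (a / (a + b)) / ((k - 1) * (a / (a + b)) + 1) := by
  have hden : (k - 1) * (a / (a + b)) + 1 = (k * a + b) / (a + b) := by
    field_simp; ring
  rw [hden, mul_div_assoc', div_div_div_cancel_right₀ hab]

theorem div_add_mul_eq (hab : a + b ≠ 0) :
    a / (a + k * b) = a / (a + b) / (a / (a + b) + k * (1 - a / (a + b))) := by
  have hden : a / (a + b) + k * (1 - a / (a + b)) = (a + k * b) / (a + b) := by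
    field_simp; ring
  rw [hden, div_div_div_cancel_right₀ hab]

theorem mul_div_mul_add_le_iff (hk : 0 < k)
    (ha₁ : 0 ≤ a₁) (hb₁ : 0 ≤ b₁) (h₁ : a₁ + b₁ ≠ 0)
    (ha₂ : 0 ≤ a₂) (hb₂ : 0 ≤ b₂) (h₂ : a₂ + b₂ ≠ 0) :
    k * a₁ / (k * a₁ + b₁) ≤ k * a₂ / (k * a₂ + b₂) ↔ a₁ / (a₁ + b₁) ≤ a₂ / (a₂ + b₂) := by
  rw [div_add_le_div_add_iff (mul_add_pos hk ha₁ hb₁ h₁) (mul_add_pos hk ha₂ hb₂ h₂),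
    div_add_le_div_add_iff ((add_nonneg ha₁ hb₁).lt_of_ne' h₁)
      ((add_nonneg ha₂ hb₂).lt_of_ne' h₂), mul_assoc, mul_assoc, mul_le_mul_iff_right₀ hk]

theorem div_add_mul_le_iff (hk : 0 < k)
    (ha₁ : 0 ≤ a₁) (hb₁ : 0 ≤ b₁) (h₁ : a₁ + b₁ ≠ 0)
    (ha₂ : 0 ≤ a₂) (hb₂ : 0 ≤ b₂) (h₂ : a₂ + b₂ ≠ 0) :
    a₁ / (a₁ + k * b₁) ≤ a₂ / (a₂ + k * b₂) ↔ a₁ / (a₁ + b₁) ≤ a₂ / (a₂ + b₂) := by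
  rw [div_add_le_div_add_iff (add_mul_pos hk ha₁ hb₁ h₁) (add_mul_pos hk ha₂ hb₂ h₂),
    div_add_le_div_add_iff ((add_nonneg ha₁ hb₁).lt_of_ne' h₁)
      ((add_nonneg ha₂ hb₂).lt_of_ne' h₂), mul_left_comm, mul_left_comm a₂, mul_le_mul_iff_right₀ hk]

end Fractions

theorem rankingScore_scaleInvariance_general
    (itn ifp ifn itp k : ℝ)
    (hitn : 0 ≤ itn) (hifp : 0 ≤ ifp) (hifn : 0 ≤ ifn) (hitp : 0 ≤ itp)
    (hk : 0 < k) :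
    -- value formula for I' = (k·itn, ifp, ifn, k·itp)
    (∀ tn fp fn tp : ℝ, 0 ≤ tn → 0 ≤ fp → 0 ≤ fn → 0 ≤ tp →
      tn + fp + fn + tp = 1 → RIDen itn ifp ifn itp tn fp fn tp ≠ 0 →
        RIDen (k * itn) ifp ifn (k * itp) tn fp fn tp ≠ 0 ∧
        RI (k * itn) ifp ifn (k * itp) tn fp fn tp =
          k * RI itn ifp ifn itp tn fp fn tp /
            ((k - 1) * RI itn ifp ifn itp tn fp fn tp + 1)) ∧
    -- order preservation for I'
    (∀ tn₁ fp₁ fn₁ tp₁ tn₂ fp₂ fn₂ tp₂ : ℝ,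
      0 ≤ tn₁ → 0 ≤ fp₁ → 0 ≤ fn₁ → 0 ≤ tp₁ → tn₁ + fp₁ + fn₁ + tp₁ = 1 →
      0 ≤ tn₂ → 0 ≤ fp₂ → 0 ≤ fn₂ → 0 ≤ tp₂ → tn₂ + fp₂ + fn₂ + tp₂ = 1 →
      RIDen itn ifp ifn itp tn₁ fp₁ fn₁ tp₁ ≠ 0 →
      RIDen itn ifp ifn itp tn₂ fp₂ fn₂ tp₂ ≠ 0 →
        (RI (k * itn) ifp ifn (k * itp) tn₁ fp₁ fn₁ tp₁ ≤
            RI (k * itn) ifp ifn (k * itp) tn₂ fp₂ fn₂ tp₂ ↔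
          RI itn ifp ifn itp tn₁ fp₁ fn₁ tp₁ ≤ RI itn ifp ifn itp tn₂ fp₂ fn₂ tp₂)) ∧
    -- value formula for I'' = (itn, k·ifp, k·ifn, itp)
    (∀ tn fp fn tp : ℝ, 0 ≤ tn → 0 ≤ fp → 0 ≤ fn → 0 ≤ tp →
      tn + fp + fn + tp = 1 → RIDen itn ifp ifn itp tn fp fn tp ≠ 0 →
        RIDen itn (k * ifp) (k * ifn) itp tn fp fn tp ≠ 0 ∧
        RI itn (k * ifp) (k * ifn) itp tn fp fn tp =
          RI itn ifp ifn itp tn fp fn tp /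
            (RI itn ifp ifn itp tn fp fn tp +
              k * (1 - RI itn ifp ifn itp tn fp fn tp))) ∧
    -- order preservation for I''
    (∀ tn₁ fp₁ fn₁ tp₁ tn₂ fp₂ fn₂ tp₂ : ℝ,
      0 ≤ tn₁ → 0 ≤ fp₁ → 0 ≤ fn₁ → 0 ≤ tp₁ → tn₁ + fp₁ + fn₁ + tp₁ = 1 →
      0 ≤ tn₂ → 0 ≤ fp₂ → 0 ≤ fn₂ → 0 ≤ tp₂ → tn₂ + fp₂ + fn₂ + tp₂ = 1 →
      RIDen itn ifp ifn itp tn₁ fp₁ fn₁ tp₁ ≠ 0 →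
      RIDen itn ifp ifn itp tn₂ fp₂ fn₂ tp₂ ≠ 0 →
        (RI itn (k * ifp) (k * ifn) itp tn₁ fp₁ fn₁ tp₁ ≤
            RI itn (k * ifp) (k * ifn) itp tn₂ fp₂ fn₂ tp₂ ↔
          RI itn ifp ifn itp tn₁ fp₁ fn₁ tp₁ ≤ RI itn ifp ifn itp tn₂ fp₂ fn₂ tp₂)) := by
  have hN {tn tp : ℝ} (htn : 0 ≤ tn) (htp : 0 ≤ tp) := RINum_nonneg hitn hitp htn htp
  have hF {fp fn : ℝ} (hfp : 0 ≤ fp) (hfn : 0 ≤ fn) := RIErr_nonneg hifp hifn hfp hfn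
  simp only [RI_eq, RIDen_eq, RINum_mul, RIErr_mul]
  refine ⟨fun tn fp fn tp htn hfp hfn htp _ h =>
      ⟨(mul_add_pos hk (hN htn htp) (hF hfp hfn) h).ne', mul_div_mul_add_eq h⟩,
    fun tn₁ fp₁ fn₁ tp₁ tn₂ fp₂ fn₂ tp₂ htn₁ hfp₁ hfn₁ htp₁ _ htn₂ hfp₂ hfn₂ htp₂ _ h₁ h₂ =>
      mul_div_mul_add_le_iff hk (hN htn₁ htp₁) (hF hfp₁ hfn₁) h₁ (hN htn₂ htp₂) (hF hfp₂ hfn₂) h₂,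
    fun tn fp fn tp htn hfp hfn htp _ h =>
      ⟨(add_mul_pos hk (hN htn htp) (hF hfp hfn) h).ne', div_add_mul_eq h⟩,
    fun tn₁ fp₁ fn₁ tp₁ tn₂ fp₂ fn₂ tp₂ htn₁ hfp₁ hfn₁ htp₁ _ htn₂ hfp₂ hfn₂ htp₂ _ h₁ h₂ =>
      div_add_mul_le_iff hk (hN htn₁ htp₁) (hF hfp₁ hfn₁) h₁ (hN htn₂ htp₂) (hF hfp₂ hfn₂) h₂⟩

/-- Multiplying both `itn` and `itp` (or both `ifp` and `ifn`) of an importance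
by the same strictly positive constant `k` leads to another ranking score that
is monotonously increasing with the original one; in particular, the induced
performance ordering is unaffected. -/
theorem rankingScore_scaleInvariance
    (itn ifp ifn itp k : ℝ)
    (hitn : 0 ≤ itn) (hifp : 0 ≤ ifp) (hifn : 0 ≤ ifn) (hitp : 0 ≤ itp)
    (hI1 : itn + itp ≠ 0) (hI2 : ifp + ifn ≠ 0) (hk : 0 < k) :
    -- value formula for I' = (k·itn, ifp, ifn, k·itp)
    (∀ tn fp fn tp : ℝ, 0 ≤ tn → 0 ≤ fp → 0 ≤ fn → 0 ≤ tp →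
      tn + fp + fn + tp = 1 → RIDen itn ifp ifn itp tn fp fn tp ≠ 0 →
        RIDen (k * itn) ifp ifn (k * itp) tn fp fn tp ≠ 0 ∧
        RI (k * itn) ifp ifn (k * itp) tn fp fn tp =
          k * RI itn ifp ifn itp tn fp fn tp /
            ((k - 1) * RI itn ifp ifn itp tn fp fn tp + 1)) ∧
    -- order preservation for I'
    (∀ tn₁ fp₁ fn₁ tp₁ tn₂ fp₂ fn₂ tp₂ : ℝ,
      0 ≤ tn₁ → 0 ≤ fp₁ → 0 ≤ fn₁ → 0 ≤ tp₁ → tn₁ + fp₁ + fn₁ + tp₁ = 1 →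
      0 ≤ tn₂ → 0 ≤ fp₂ → 0 ≤ fn₂ → 0 ≤ tp₂ → tn₂ + fp₂ + fn₂ + tp₂ = 1 →
      RIDen itn ifp ifn itp tn₁ fp₁ fn₁ tp₁ ≠ 0 →
      RIDen itn ifp ifn itp tn₂ fp₂ fn₂ tp₂ ≠ 0 →
        (RI (k * itn) ifp ifn (k * itp) tn₁ fp₁ fn₁ tp₁ ≤
            RI (k * itn) ifp ifn (k * itp) tn₂ fp₂ fn₂ tp₂ ↔
          RI itn ifp ifn itp tn₁ fp₁ fn₁ tp₁ ≤ RI itn ifp ifn itp tn₂ fp₂ fn₂ tp₂)) ∧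
    -- value formula for I'' = (itn, k·ifp, k·ifn, itp)
    (∀ tn fp fn tp : ℝ, 0 ≤ tn → 0 ≤ fp → 0 ≤ fn → 0 ≤ tp →
      tn + fp + fn + tp = 1 → RIDen itn ifp ifn itp tn fp fn tp ≠ 0 →
        RIDen itn (k * ifp) (k * ifn) itp tn fp fn tp ≠ 0 ∧
        RI itn (k * ifp) (k * ifn) itp tn fp fn tp =
          RI itn ifp ifn itp tn fp fn tp /
            (RI itn ifp ifn itp tn fp fn tp +
              k * (1 - RI itn ifp ifn itp tn fp fn tp))) ∧
    -- order preservation for I''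
    (∀ tn₁ fp₁ fn₁ tp₁ tn₂ fp₂ fn₂ tp₂ : ℝ,
      0 ≤ tn₁ → 0 ≤ fp₁ → 0 ≤ fn₁ → 0 ≤ tp₁ → tn₁ + fp₁ + fn₁ + tp₁ = 1 →
      0 ≤ tn₂ → 0 ≤ fp₂ → 0 ≤ fn₂ → 0 ≤ tp₂ → tn₂ + fp₂ + fn₂ + tp₂ = 1 →
      RIDen itn ifp ifn itp tn₁ fp₁ fn₁ tp₁ ≠ 0 →
      RIDen itn ifp ifn itp tn₂ fp₂ fn₂ tp₂ ≠ 0 →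
        (RI itn (k * ifp) (k * ifn) itp tn₁ fp₁ fn₁ tp₁ ≤
            RI itn (k * ifp) (k * ifn) itp tn₂ fp₂ fn₂ tp₂ ↔
          RI itn ifp ifn itp tn₁ fp₁ fn₁ tp₁ ≤ RI itn ifp ifn itp tn₂ fp₂ fn₂ tp₂)) :=
  rankingScore_scaleInvariance_general itn ifp ifn itp k hitn hifp hifn hitp hk
end

section
/- Let π₋, π₊, π₋', π₊' be strictly positive real numbers with π₋ + π₊ = 1 and π₋' + π₊' = 1, and define f : [0,1] → [0,1] by f(x) = (x·π₊'/π₊) / ((1−x)·π₋'/π₋ + x·π₊'/π₊). Let a, b ∈ [0,1], and for a performance P with tn + fp = π₋ and fn + tp = π₊ let shift(P) = (tn·π₋'/π₋, fp·π₋'/π₋, fn·π₊'/π₊, tp·π₊'/π₊). Then for any two such performances P₁ and P₂ such that R_{a,b} is defined at shift(P₁) and shift(P₂) and R_{f(a),f(b)} is defined at P₁ and P₂, one has R_{a,b}(shift(P₁)) ≤ R_{a,b}(shift(P₂)) if and only if R_{f(a),f(b)}(P₁) ≤ R_{f(a),f(b)}(P₂). -/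
/-- The reparametrization `f` of the Tile parameters induced by a target/prior
shift from `(pn, pp)` to `(pn', pp')`. -/
noncomputable def fShift (pn pp pn' pp' x : ℝ) : ℝ :=
  (x * (pp' / pp)) / ((1 - x) * (pn' / pn) + x * (pp' / pp))

lemma one_sub_mul_add_mul_nonneg {x u v : ℝ} (hx : x ∈ Set.Icc (0 : ℝ) 1) (hu : 0 ≤ u)
    (hv : 0 ≤ v) : 0 ≤ (1 - x) * u + x * v :=
  convex_Ici (0 : ℝ) hu hv (sub_nonneg.2 hx.2) hx.1 (sub_add_cancel 1 x)

lemma one_sub_mul_add_mul_pos {x u v : ℝ} (hx : x ∈ Set.Icc (0 : ℝ) 1) (hu : 0 < u)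
    (hv : 0 < v) : 0 < (1 - x) * u + x * v :=
  convex_Ioi (0 : ℝ) hu hv (sub_nonneg.2 hx.2) hx.1 (sub_add_cancel 1 x)

lemma div_add_mem_Icc {x y : ℝ} (hx : 0 ≤ x) (hy : 0 ≤ y) :
    x / (x + y) ∈ Set.Icc (0 : ℝ) 1 :=
  ⟨by positivity, div_le_one_of_le₀ (le_add_of_nonneg_right hy) (by positivity)⟩

noncomputable def reweight (c d t : ℝ) : ℝ :=
  c * t / (c * t + d * (1 - t))

lemma reweight_le_reweight_iff {c d t t' : ℝ} (hc : 0 < c) (hd : 0 < d)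
    (ht : t ∈ Set.Icc (0 : ℝ) 1) (ht' : t' ∈ Set.Icc (0 : ℝ) 1) :
    reweight c d t ≤ reweight c d t' ↔ t ≤ t' := by
  have hD : 0 < c * t + d * (1 - t) := by
    simpa [add_comm, mul_comm] using one_sub_mul_add_mul_pos ht hd hc
  have hD' : 0 < c * t' + d * (1 - t') := by
    simpa [add_comm, mul_comm] using one_sub_mul_add_mul_pos ht' hd hc
  rw [reweight, reweight, div_le_div_iff₀ hD hD', ← sub_nonneg]
  have hcross : c * t' * (c * t + d * (1 - t)) - c * t * (c * t' + d * (1 - t'))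
      = c * d * (t' - t) := by ring
  rw [hcross, mul_nonneg_iff_of_pos_left (by positivity), sub_nonneg]

lemma mul_div_mul_add_mul_eq_reweight {c d x y : ℝ} (hx : 0 ≤ x) (hy : 0 ≤ y) :
    c * x / (c * x + d * y) = reweight c d (x / (x + y)) := by
  rcases (add_nonneg hx hy).eq_or_lt' with hzero | hpos
  · -- both sides are `0`, through division by zero
    obtain ⟨rfl, rfl⟩ : x = 0 ∧ y = 0 := ⟨by linarith, by linarith⟩
    simp [reweight]
  · rw [reweight]
    field_simp
    ring

lemma mul_div_mul_add_mul_le_iff {c d x y x' y' : ℝ} (hc : 0 < c) (hd : 0 < d)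
    (hx : 0 ≤ x) (hy : 0 ≤ y) (hx' : 0 ≤ x') (hy' : 0 ≤ y') :
    c * x / (c * x + d * y) ≤ c * x' / (c * x' + d * y') ↔ x / (x + y) ≤ x' / (x' + y') := by
  rw [mul_div_mul_add_mul_eq_reweight hx hy, mul_div_mul_add_mul_eq_reweight hx' hy',
    reweight_le_reweight_iff hc hd (div_add_mem_Icc hx hy) (div_add_mem_Icc hx' hy')]

lemma Rab_eq_div_add (a b tn fp fn tp : ℝ) :
    Rab a b tn fp fn tp =
      ((1 - a) * tn + a * tp) / (((1 - a) * tn + a * tp) + ((1 - b) * fp + b * fn)) := by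
  rw [Rab]
  ring

lemma one_sub_fShift_mul_add_fShift_mul {pn pp pn' pp' x : ℝ}
    (hD : (1 - x) * (pn' / pn) + x * (pp' / pp) ≠ 0) (u v : ℝ) :
    (1 - fShift pn pp pn' pp' x) * u + fShift pn pp pn' pp' x * v =
      ((1 - x) * (pn' / pn) + x * (pp' / pp))⁻¹ *
        ((1 - x) * (u * (pn' / pn)) + x * (v * (pp' / pp))) := by
  rw [fShift]
  generalize pn' / pn = α at *
  generalize pp' / pp = β at *
  field_simp
  ring

theorem rab_priorShift_ordering_general
    (pn pp pn' pp' : ℝ) (hpn : 0 < pn) (hpp : 0 < pp) (hpn' : 0 < pn') (hpp' : 0 < pp')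
    (a b : ℝ) (ha : a ∈ Set.Icc (0:ℝ) 1) (hb : b ∈ Set.Icc (0:ℝ) 1)
    (tn₁ fp₁ fn₁ tp₁ : ℝ)
    (htn₁ : 0 ≤ tn₁) (hfp₁ : 0 ≤ fp₁) (hfn₁ : 0 ≤ fn₁) (htp₁ : 0 ≤ tp₁)
    (tn₂ fp₂ fn₂ tp₂ : ℝ)
    (htn₂ : 0 ≤ tn₂) (hfp₂ : 0 ≤ fp₂) (hfn₂ : 0 ≤ fn₂) (htp₂ : 0 ≤ tp₂) :
    Rab a b (tn₁ * (pn' / pn)) (fp₁ * (pn' / pn)) (fn₁ * (pp' / pp)) (tp₁ * (pp' / pp)) ≤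
        Rab a b (tn₂ * (pn' / pn)) (fp₂ * (pn' / pn)) (fn₂ * (pp' / pp)) (tp₂ * (pp' / pp)) ↔
      Rab (fShift pn pp pn' pp' a) (fShift pn pp pn' pp' b) tn₁ fp₁ fn₁ tp₁ ≤
        Rab (fShift pn pp pn' pp' a) (fShift pn pp pn' pp' b) tn₂ fp₂ fn₂ tp₂ := by
  have hα : 0 < pn' / pn := div_pos hpn' hpn
  have hβ : 0 < pp' / pp := div_pos hpp' hpp
  have hDa := one_sub_mul_add_mul_pos ha hα hβ
  have hDb := one_sub_mul_add_mul_pos hb hα hβ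
  simp only [Rab_eq_div_add, one_sub_fShift_mul_add_fShift_mul hDa.ne',
    one_sub_fShift_mul_add_fShift_mul hDb.ne']
  rw [mul_div_mul_add_mul_le_iff (inv_pos.2 hDa) (inv_pos.2 hDb)]
  · exact one_sub_mul_add_mul_nonneg ha (by positivity) (by positivity)
  · exact one_sub_mul_add_mul_nonneg hb (by positivity) (by positivity)
  · exact one_sub_mul_add_mul_nonneg ha (by positivity) (by positivity)
  · exact one_sub_mul_add_mul_nonneg hb (by positivity) (by positivity)

/-- The ordering induced by `R_{a,b}` composed with the target/prior shift from
`(pn, pp)` to `(pn', pp')` is the same as the ordering induced by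
`R_{f(a),f(b)}`. -/
theorem rab_priorShift_ordering
    (pn pp pn' pp' : ℝ) (hpn : 0 < pn) (hpp : 0 < pp) (hpn' : 0 < pn') (hpp' : 0 < pp')
    (hps : pn + pp = 1) (hps' : pn' + pp' = 1)
    (a b : ℝ) (ha : a ∈ Set.Icc (0:ℝ) 1) (hb : b ∈ Set.Icc (0:ℝ) 1)
    (tn₁ fp₁ fn₁ tp₁ : ℝ)
    (htn₁ : 0 ≤ tn₁) (hfp₁ : 0 ≤ fp₁) (hfn₁ : 0 ≤ fn₁) (htp₁ : 0 ≤ tp₁)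
    (hsum₁ : tn₁ + fp₁ + fn₁ + tp₁ = 1)
    (hpr₁n : tn₁ + fp₁ = pn) (hpr₁p : fn₁ + tp₁ = pp)
    (tn₂ fp₂ fn₂ tp₂ : ℝ)
    (htn₂ : 0 ≤ tn₂) (hfp₂ : 0 ≤ fp₂) (hfn₂ : 0 ≤ fn₂) (htp₂ : 0 ≤ tp₂)
    (hsum₂ : tn₂ + fp₂ + fn₂ + tp₂ = 1)
    (hpr₂n : tn₂ + fp₂ = pn) (hpr₂p : fn₂ + tp₂ = pp)
    (hd₁ : RabDen a b (tn₁ * (pn' / pn)) (fp₁ * (pn' / pn))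
        (fn₁ * (pp' / pp)) (tp₁ * (pp' / pp)) ≠ 0)
    (hd₂ : RabDen a b (tn₂ * (pn' / pn)) (fp₂ * (pn' / pn))
        (fn₂ * (pp' / pp)) (tp₂ * (pp' / pp)) ≠ 0)
    (hd₁' : RabDen (fShift pn pp pn' pp' a) (fShift pn pp pn' pp' b) tn₁ fp₁ fn₁ tp₁ ≠ 0)
    (hd₂' : RabDen (fShift pn pp pn' pp' a) (fShift pn pp pn' pp' b) tn₂ fp₂ fn₂ tp₂ ≠ 0) :
    Rab a b (tn₁ * (pn' / pn)) (fp₁ * (pn' / pn)) (fn₁ * (pp' / pp)) (tp₁ * (pp' / pp)) ≤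
        Rab a b (tn₂ * (pn' / pn)) (fp₂ * (pn' / pn)) (fn₂ * (pp' / pp)) (tp₂ * (pp' / pp)) ↔
      Rab (fShift pn pp pn' pp' a) (fShift pn pp pn' pp' b) tn₁ fp₁ fn₁ tp₁ ≤
        Rab (fShift pn pp pn' pp' a) (fShift pn pp pn' pp' b) tn₂ fp₂ fn₂ tp₂ :=
  rab_priorShift_ordering_general pn pp pn' pp' hpn hpp hpn' hpp' a b ha hb tn₁ fp₁ fn₁ tp₁ htn₁
    hfp₁ hfn₁ htp₁ tn₂ fp₂ fn₂ tp₂ htn₂ hfp₂ hfn₂ htp₂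
end

section
/- Let β ≥ 0 and let P = (tn, fp, fn, tp) be a two-class classification performance. If (1+β²)·tp + β²·fn + fp ≠ 0, then the F-score F_β(P) = (1+β²)·tp / ((1+β²)·tp + β²·fn + fp) equals R_I(P), where I is the importance with i_tn = 0, i_fp = 1/(1+β²), i_fn = β²/(1+β²), and i_tp = 1; moreover this importance satisfies i_tn + i_tp = i_fp + i_fn and the two scores have the same domain (the denominator of R_I at P is nonzero exactly when (1+β²)·tp + β²·fn + fp ≠ 0). -/
theorem RI_eq_div_RIDen (itn ifp ifn itp tn fp fn tp : ℝ) :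
    RI itn ifp ifn itp tn fp fn tp =
      (itn * tn + itp * tp) / RIDen itn ifp ifn itp tn fp fn tp :=
  rfl

theorem RIDen_div_right (c itn ifp ifn itp tn fp fn tp : ℝ) :
    RIDen (itn / c) (ifp / c) (ifn / c) (itp / c) tn fp fn tp =
      RIDen itn ifp ifn itp tn fp fn tp / c := by
  unfold RIDen
  ring

theorem RI_div_right {c : ℝ} (hc : c ≠ 0) (itn ifp ifn itp tn fp fn tp : ℝ) :
    RI (itn / c) (ifp / c) (ifn / c) (itp / c) tn fp fn tp =
      RI itn ifp ifn itp tn fp fn tp := by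
  rw [RI_eq_div_RIDen, RIDen_div_right, RI_eq_div_RIDen, div_mul_eq_mul_div, div_mul_eq_mul_div,
    ← add_div, div_div_div_cancel_right₀ hc]

theorem fBeta_is_canonical_rankingScore_general
    (β tn fp fn tp : ℝ) :
    (1 + β ^ 2) * tp / ((1 + β ^ 2) * tp + β ^ 2 * fn + fp) =
        RI 0 (1 / (1 + β ^ 2)) (β ^ 2 / (1 + β ^ 2)) 1 tn fp fn tp ∧
      (0 : ℝ) + 1 = 1 / (1 + β ^ 2) + β ^ 2 / (1 + β ^ 2) ∧
      (RIDen 0 (1 / (1 + β ^ 2)) (β ^ 2 / (1 + β ^ 2)) 1 tn fp fn tp ≠ 0 ↔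
        (1 + β ^ 2) * tp + β ^ 2 * fn + fp ≠ 0) := by
  have hc : 1 + β ^ 2 ≠ 0 := by positivity
  -- the importance is `(0, 1, β², 1 + β²) / (1 + β²)`
  have hRI : RI 0 (1 / (1 + β ^ 2)) (β ^ 2 / (1 + β ^ 2)) 1 tn fp fn tp =
      RI 0 1 (β ^ 2) (1 + β ^ 2) tn fp fn tp := by
    rw [← RI_div_right hc 0 1 (β ^ 2), zero_div, div_self hc]
  have hRIDen : RIDen 0 (1 / (1 + β ^ 2)) (β ^ 2 / (1 + β ^ 2)) 1 tn fp fn tp =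
      RIDen 0 1 (β ^ 2) (1 + β ^ 2) tn fp fn tp / (1 + β ^ 2) := by
    rw [← RIDen_div_right, zero_div, div_self hc]
  have hden : RIDen 0 1 (β ^ 2) (1 + β ^ 2) tn fp fn tp =
      (1 + β ^ 2) * tp + β ^ 2 * fn + fp := by
    unfold RIDen
    ring
  rw [hRI, hRIDen, RI_eq_div_RIDen, hden, div_ne_zero_iff]
  refine ⟨by ring_nf, by field_simp; ring, by simp [hc]⟩

/-- All F-scores `F_β` are canonical ranking scores: `F_β = R_I` with
`I = (0, 1/(1+β²), β²/(1+β²), 1)`, this importance is canonical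
(`itn + itp = ifp + ifn`), and both scores have the same domain. -/
theorem fBeta_is_canonical_rankingScore
    (β tn fp fn tp : ℝ) (hβ : 0 ≤ β)
    (htn : 0 ≤ tn) (hfp : 0 ≤ fp) (hfn : 0 ≤ fn) (htp : 0 ≤ tp)
    (hsum : tn + fp + fn + tp = 1)
    (hden : (1 + β ^ 2) * tp + β ^ 2 * fn + fp ≠ 0) :
    (1 + β ^ 2) * tp / ((1 + β ^ 2) * tp + β ^ 2 * fn + fp) =
        RI 0 (1 / (1 + β ^ 2)) (β ^ 2 / (1 + β ^ 2)) 1 tn fp fn tp ∧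
      (0 : ℝ) + 1 = 1 / (1 + β ^ 2) + β ^ 2 / (1 + β ^ 2) ∧
      (RIDen 0 (1 / (1 + β ^ 2)) (β ^ 2 / (1 + β ^ 2)) 1 tn fp fn tp ≠ 0 ↔
        (1 + β ^ 2) * tp + β ^ 2 * fn + fp ≠ 0) :=
  fBeta_is_canonical_rankingScore_general β tn fp fn tp
end

section
/- Let π₋, π₊ ∈ (0,1) with π₋ + π₊ = 1, and let P = (tn, fp, fn, tp) be a two-class classification performance with tn + fp = π₋ and fn + tp = π₊. Define the accuracy A = tn + tp, the expected accuracy EA = π₋·(tn + fn) + π₊·(fp + tp), and Cohen's kappa κ(P) = (A − EA)/(1 − EA). If EA ≠ 1, then (π₋² + π₊²)·κ(P) + 2·π₋·π₊ = R_I(P), where I is the importance with i_tn = π₊²/(π₋² + π₊²), i_fp = 1/2, i_fn = 1/2, and i_tp = π₋²/(π₋² + π₊²), and the denominator of R_I at P is nonzero. -/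
/-- For fixed priors, Cohen's kappa is an affine transformation of a canonical
ranking score: `(π₋² + π₊²)·κ(P) + 2·π₋·π₊ = R_I(P)` with
`I = (π₊²/(π₋²+π₊²), 1/2, 1/2, π₋²/(π₋²+π₊²))`. -/
theorem cohenKappa_affine_rankingScore
    (pn pp : ℝ) (hpn : pn ∈ Set.Ioo (0:ℝ) 1) (hpp : pp ∈ Set.Ioo (0:ℝ) 1)
    (hps : pn + pp = 1)
    (tn fp fn tp : ℝ) (htn : 0 ≤ tn) (hfp : 0 ≤ fp) (hfn : 0 ≤ fn) (htp : 0 ≤ tp)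
    (hsum : tn + fp + fn + tp = 1)
    (hprior_neg : tn + fp = pn) (hprior_pos : fn + tp = pp)
    (hEA : pn * (tn + fn) + pp * (fp + tp) ≠ 1) :
    RIDen (pp ^ 2 / (pn ^ 2 + pp ^ 2)) (1 / 2) (1 / 2) (pn ^ 2 / (pn ^ 2 + pp ^ 2))
        tn fp fn tp ≠ 0 ∧
      (pn ^ 2 + pp ^ 2) *
          (((tn + tp) - (pn * (tn + fn) + pp * (fp + tp))) /
            (1 - (pn * (tn + fn) + pp * (fp + tp)))) + 2 * pn * pp =
        RI (pp ^ 2 / (pn ^ 2 + pp ^ 2)) (1 / 2) (1 / 2) (pn ^ 2 / (pn ^ 2 + pp ^ 2))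
          tn fp fn tp := by
  obtain ⟨hpn0, hpn1⟩ := hpn
  obtain ⟨hpp0, hpp1⟩ := hpp
  have hS : pn ^ 2 + pp ^ 2 ≠ 0 := by positivity
  have hS2 : (0:ℝ) < 2 * (pn ^ 2 + pp ^ 2) := by positivity
  have hE : 1 - (pn * (tn + fn) + pp * (fp + tp)) ≠ 0 := by
    intro h; exact hEA (by linarith)
  have htn' : tn = pn - fp := by linarith
  have htp' : tp = pp - fn := by linarith
  have hpp' : pp = 1 - pn := by linarith
  subst htn' htp' hpp'
  have hden : RIDen ((1 - pn) ^ 2 / (pn ^ 2 + (1 - pn) ^ 2)) (1 / 2) (1 / 2)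
      (pn ^ 2 / (pn ^ 2 + (1 - pn) ^ 2)) (pn - fp) fp fn ((1 - pn) - fn)
      = (1 - (pn * ((pn - fp) + fn) + (1 - pn) * (fp + ((1 - pn) - fn)))) /
        (2 * (pn ^ 2 + (1 - pn) ^ 2)) := by
    unfold RIDen
    field_simp
    ring
  have hD : RIDen ((1 - pn) ^ 2 / (pn ^ 2 + (1 - pn) ^ 2)) (1 / 2) (1 / 2)
      (pn ^ 2 / (pn ^ 2 + (1 - pn) ^ 2)) (pn - fp) fp fn ((1 - pn) - fn) ≠ 0 := by
    rw [hden]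
    exact div_ne_zero hE (ne_of_gt hS2)
  refine ⟨hD, ?_⟩
  unfold RIDen at hD
  unfold RI
  rw [eq_div_iff hD]
  field_simp
  ring
end

section
/- Let P = (tn, fp, fn, tp) be a two-class classification performance with priors π₋ = tn + fp and π₊ = fn + tp both nonzero, and suppose tn + fn ≠ 0. Define TNR = tn/π₋, TPR = tp/π₊, and NPV = tn/(tn + fn). Then the standardized negative predictive value SNPV = TNR / (TNR + (1 − TPR)) satisfies SNPV = (NPV·(1/π₋)) / (NPV·(1/π₋) + (1 − NPV)·(1/π₊)); in particular, for fixed priors, SNPV is a strictly increasing function of NPV. -/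
/-! Both sides of the identity equal `TNR / (TNR + FNR)` once `1 - TPR = fn/π₊` and
`1 - NPV = fn/(tn + fn)` are substituted: the right-hand side is that quotient with numerator and
denominator divided by `tn + fn`. The map `x ↦ x a / (x a + (1 - x) b)` is a Möbius transformation
of determinant `a b`; cross-multiplying, `f x < f y` reduces to `a b (y - x) > 0`. -/

theorem strictMonoOn_mul_div_mul_add_one_sub_mul {a b : ℝ} (hab : 0 < a * b) :
    StrictMonoOn (fun x : ℝ => x * a / (x * a + (1 - x) * b))
      {x | 0 < x * a + (1 - x) * b} := by
  intro x hx y hy hxy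
  rw [div_lt_div_iff₀ hx hy]
  have cross : y * a * (x * a + (1 - x) * b) - x * a * (y * a + (1 - y) * b) = a * b * (y - x) := by
    ring
  nlinarith [mul_pos hab (sub_pos.mpr hxy)]

theorem Set.Icc_subset_setOf_mul_add_one_sub_mul_pos {a b : ℝ} (ha : 0 < a) (hb : 0 < b) :
    Set.Icc 0 1 ⊆ {x : ℝ | 0 < x * a + (1 - x) * b} := by
  rintro x ⟨hx₀, hx₁⟩
  rcases hx₀.eq_or_lt with rfl | hx₀
  · simpa using hb
  · exact add_pos_of_pos_of_nonneg (mul_pos hx₀ ha) (mul_nonneg (sub_nonneg.mpr hx₁) hb.le)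

theorem snpv_eq_npv_form {tn fp fn tp : ℝ} (hpp : fn + tp ≠ 0) (hnd : tn + fn ≠ 0) :
    (tn / (tn + fp)) / (tn / (tn + fp) + (1 - tp / (fn + tp))) =
      ((tn / (tn + fn)) * (1 / (tn + fp))) /
        ((tn / (tn + fn)) * (1 / (tn + fp)) + (1 - tn / (tn + fn)) * (1 / (fn + tp))) := by
  have scale : ∀ u p : ℝ, u / (tn + fn) * (1 / p) = (tn + fn)⁻¹ * (u / p) := fun _ _ => by ring
  rw [one_sub_div hpp, one_sub_div hnd, add_sub_cancel_right, add_sub_cancel_left, scale, scale,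
    ← mul_add, mul_div_mul_left _ _ (inv_ne_zero hnd)]

theorem snpv_increasing_in_npv_general
    (tn fp fn tp : ℝ) (htn : 0 ≤ tn) (hfp : 0 ≤ fp) (hfn : 0 ≤ fn) (htp : 0 ≤ tp)
    (hpn : tn + fp ≠ 0) (hpp : fn + tp ≠ 0) (hnd : tn + fn ≠ 0) :
    (tn / (tn + fp)) / (tn / (tn + fp) + (1 - tp / (fn + tp))) =
        ((tn / (tn + fn)) * (1 / (tn + fp))) /
          ((tn / (tn + fn)) * (1 / (tn + fp)) +
            (1 - tn / (tn + fn)) * (1 / (fn + tp))) ∧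
      StrictMonoOn
        (fun x : ℝ => (x * (1 / (tn + fp))) /
          (x * (1 / (tn + fp)) + (1 - x) * (1 / (fn + tp))))
        (Set.Icc 0 1) := by
  have hpn' : 0 < 1 / (tn + fp) := one_div_pos.mpr ((add_nonneg htn hfp).lt_of_ne' hpn)
  have hpp' : 0 < 1 / (fn + tp) := one_div_pos.mpr ((add_nonneg hfn htp).lt_of_ne' hpp)
  exact ⟨snpv_eq_npv_form hpp hnd,
    (strictMonoOn_mul_div_mul_add_one_sub_mul (mul_pos hpn' hpp')).mono
      (Set.Icc_subset_setOf_mul_add_one_sub_mul_pos hpn' hpp')⟩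

/-- The standardized negative predictive value `SNPV = TNR/(TNR + (1 - TPR))`
is, for fixed priors, a strictly increasing function of the negative
predictive value `NPV`. -/
theorem snpv_increasing_in_npv
    (tn fp fn tp : ℝ) (htn : 0 ≤ tn) (hfp : 0 ≤ fp) (hfn : 0 ≤ fn) (htp : 0 ≤ tp)
    (hsum : tn + fp + fn + tp = 1)
    (hpn : tn + fp ≠ 0) (hpp : fn + tp ≠ 0) (hnd : tn + fn ≠ 0) :
    (tn / (tn + fp)) / (tn / (tn + fp) + (1 - tp / (fn + tp))) =
        ((tn / (tn + fn)) * (1 / (tn + fp))) /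
          ((tn / (tn + fn)) * (1 / (tn + fp)) +
            (1 - tn / (tn + fn)) * (1 / (fn + tp))) ∧
      StrictMonoOn
        (fun x : ℝ => (x * (1 / (tn + fp))) /
          (x * (1 / (tn + fp)) + (1 - x) * (1 / (fn + tp))))
        (Set.Icc 0 1) :=
  snpv_increasing_in_npv_general tn fp fn tp htn hfp hfn htp hpn hpp hnd
end

section
/- Let π₋, π₊ ∈ (0,1) with π₋ + π₊ = 1, and let a, b ∈ [0,1] satisfy π₊²·a·b = π₋²·(1−a)·(1−b). Then the canonical ranking score R_{a,b} takes the same value on all no-skill performances with priors (π₋, π₊): for any τ₋, τ₊ ∈ [0,1] with τ₋ + τ₊ = 1, letting P_τ = (π₋·τ₋, π₋·τ₊, π₊·τ₋, π₊·τ₊), the value R_{a,b}(P_τ) (whenever its denominator is nonzero) does not depend on τ₋. -/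
/-- For fixed priors `(π₋, π₊)`, the canonical ranking scores located on the
curve `γ_π : π₊²·a·b = π₋²·(1-a)·(1-b)` take the same value on all no-skill
performances `(π₋·τ₋, π₋·τ₊, π₊·τ₋, π₊·τ₊)`, regardless of the prediction
rates `(τ₋, τ₊)`. -/
theorem noSkill_equal_fixedPriors
    (pn pp : ℝ) (hpn : pn ∈ Set.Ioo (0:ℝ) 1) (hpp : pp ∈ Set.Ioo (0:ℝ) 1)
    (hps : pn + pp = 1)
    (a b : ℝ) (ha : a ∈ Set.Icc (0:ℝ) 1) (hb : b ∈ Set.Icc (0:ℝ) 1)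
    (hcurve : pp ^ 2 * a * b = pn ^ 2 * (1 - a) * (1 - b))
    (t₁ t₂ s₁ s₂ : ℝ)
    (ht₁ : t₁ ∈ Set.Icc (0:ℝ) 1) (ht₂ : t₂ ∈ Set.Icc (0:ℝ) 1) (hts : t₁ + t₂ = 1)
    (hs₁ : s₁ ∈ Set.Icc (0:ℝ) 1) (hs₂ : s₂ ∈ Set.Icc (0:ℝ) 1) (hss : s₁ + s₂ = 1)
    (hd₁ : RabDen a b (pn * t₁) (pn * t₂) (pp * t₁) (pp * t₂) ≠ 0)
    (hd₂ : RabDen a b (pn * s₁) (pn * s₂) (pp * s₁) (pp * s₂) ≠ 0) :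
    Rab a b (pn * t₁) (pn * t₂) (pp * t₁) (pp * t₂) =
      Rab a b (pn * s₁) (pn * s₂) (pp * s₁) (pp * s₂) := by
  have h2 : t₂ = 1 - t₁ := by linarith
  have h4 : s₂ = 1 - s₁ := by linarith
  subst h2 h4
  unfold Rab
  unfold RabDen at hd₁ hd₂
  rw [div_eq_div_iff hd₁ hd₂]
  linear_combination (s₁ - t₁) * hcurve
end

section
/- Let τ₋, τ₊ ∈ (0,1) with τ₋ + τ₊ = 1, and let a, b ∈ [0,1] satisfy τ₊²·a·(1−b) = τ₋²·(1−a)·b. Then the canonical ranking score R_{a,b} takes the same value on all no-skill performances with prediction rates (τ₋, τ₊): for any π₋, π₊ ∈ [0,1] with π₋ + π₊ = 1, letting P_π = (π₋·τ₋, π₋·τ₊, π₊·τ₋, π₊·τ₊), the value R_{a,b}(P_π) (whenever its denominator is nonzero) does not depend on π₋. -/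
/-- For fixed prediction rates `(τ₋, τ₊)`, the canonical ranking scores located
on the curve `γ_τ : τ₊²·a·(1-b) = τ₋²·(1-a)·b` take the same value on all
no-skill performances `(π₋·τ₋, π₋·τ₊, π₊·τ₋, π₊·τ₊)`, regardless of the priors
`(π₋, π₊)`. -/
theorem noSkill_equal_fixedPredictionRates
    (t₁ t₂ : ℝ) (ht₁ : t₁ ∈ Set.Ioo (0:ℝ) 1) (ht₂ : t₂ ∈ Set.Ioo (0:ℝ) 1)
    (hts : t₁ + t₂ = 1)
    (a b : ℝ) (ha : a ∈ Set.Icc (0:ℝ) 1) (hb : b ∈ Set.Icc (0:ℝ) 1)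
    (hcurve : t₂ ^ 2 * a * (1 - b) = t₁ ^ 2 * (1 - a) * b)
    (pn pp qn qp : ℝ)
    (hpn : pn ∈ Set.Icc (0:ℝ) 1) (hpp : pp ∈ Set.Icc (0:ℝ) 1) (hps : pn + pp = 1)
    (hqn : qn ∈ Set.Icc (0:ℝ) 1) (hqp : qp ∈ Set.Icc (0:ℝ) 1) (hqs : qn + qp = 1)
    (hd₁ : RabDen a b (pn * t₁) (pn * t₂) (pp * t₁) (pp * t₂) ≠ 0)
    (hd₂ : RabDen a b (qn * t₁) (qn * t₂) (qp * t₁) (qp * t₂) ≠ 0) :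
    Rab a b (pn * t₁) (pn * t₂) (pp * t₁) (pp * t₂) =
      Rab a b (qn * t₁) (qn * t₂) (qp * t₁) (qp * t₂) := by
  simp only [RabDen] at hd₁ hd₂
  rw [Rab, Rab, div_eq_div_iff hd₁ hd₂]
  linear_combination (pp * qn - pn * qp) * hcurve
end

section
/- Let π₋, π₊ ∈ (0,1) with π₋ + π₊ = 1, let a, b ∈ [0,1], and set a' = π₋²·(1−b) / (π₋²·(1−b) + π₊²·b) and b' = b. For a performance P = (tn, fp, fn, tp) with tn + fp = π₋ and fn + tp = π₊, define noskill(P) = (π₋·(tn+fn), π₋·(fp+tp), π₊·(tn+fn), π₊·(fp+tp)), and define the chance-corrected score K(P) = (R_{a,b}(P) − R_{a,b}(noskill(P))) / (1 − R_{a,b}(noskill(P))). Then for any two such performances P₁, P₂ for which all the scores involved are defined (nonzero denominators, and R_{a,b}(noskill(P_i)) ≠ 1), K(P₁) ≤ K(P₂) if and only if R_{a',b'}(P₁) ≤ R_{a',b'}(P₂); that is, Cohen-style correction for chance of R_{a,b} yields a score perfectly rank-correlated with R_{a',b'}. -/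
/-- The parameter `a'` such that Cohen-style chance correction of `R_{a,b}` is
perfectly rank-correlated with `R_{a',b}`. -/
noncomputable def aPrime (pn pp b : ℝ) : ℝ :=
  pn ^ 2 * (1 - b) / (pn ^ 2 * (1 - b) + pp ^ 2 * b)

def RabErr (b fp fn : ℝ) : ℝ :=
  (1 - b) * fp + b * fn

lemma RabDen_eq_add_RabErr (a b tn fp fn tp : ℝ) :
    RabDen a b tn fp fn tp = (1 - a) * tn + a * tp + RabErr b fp fn := by
  unfold RabDen RabErr; ring

lemma one_sub_Rab {a b tn fp fn tp : ℝ} (h : RabDen a b tn fp fn tp ≠ 0) :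
    1 - Rab a b tn fp fn tp = RabErr b fp fn / RabDen a b tn fp fn tp := by
  rw [Rab, ← RabDen, one_sub_div h, RabDen_eq_add_RabErr, add_sub_cancel_left]

lemma RabErr_ne_zero_of_Rab_ne_one {a b tn fp fn tp : ℝ} (h : RabDen a b tn fp fn tp ≠ 0)
    (hR : Rab a b tn fp fn tp ≠ 1) : RabErr b fp fn ≠ 0 := by
  intro he
  have h1 := one_sub_Rab h
  rw [he, zero_div, sub_eq_zero] at h1
  exact hR h1.symm

lemma Rab_shift (a b tn fp fn tp d : ℝ) :
    Rab a b (tn + d) (fp - d) (fn - d) (tp + d) =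
      Rab a b tn fp fn tp + d / RabDen a b tn fp fn tp := by
  rw [Rab, Rab, RabDen, ← add_div]
  congr 1 <;> ring

section Priors

variable {pn pp tn fp fn tp : ℝ}

lemma Rab_eq_noskill_add (a b : ℝ) (hps : pn + pp = 1) (hn : tn + fp = pn) (hp : fn + tp = pp) :
    Rab a b tn fp fn tp =
      Rab a b (pn * (tn + fn)) (pn * (fp + tp)) (pp * (tn + fn)) (pp * (fp + tp)) +
        (tn * tp - fp * fn) /
          RabDen a b (pn * (tn + fn)) (pn * (fp + tp)) (pp * (tn + fn)) (pp * (fp + tp)) := by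
  rw [← Rab_shift]
  subst hn hp
  congr 1
  · linear_combination (-tn) * hps
  · linear_combination (-fp) * hps
  · linear_combination (-fn) * hps
  · linear_combination (-tp) * hps

lemma chanceCorrected_eq (a b : ℝ) (hps : pn + pp = 1) (hn : tn + fp = pn) (hp : fn + tp = pp)
    (hden : RabDen a b (pn * (tn + fn)) (pn * (fp + tp)) (pp * (tn + fn)) (pp * (fp + tp)) ≠ 0) :
    (Rab a b tn fp fn tp -
        Rab a b (pn * (tn + fn)) (pn * (fp + tp)) (pp * (tn + fn)) (pp * (fp + tp))) /
      (1 - Rab a b (pn * (tn + fn)) (pn * (fp + tp)) (pp * (tn + fn)) (pp * (fp + tp))) =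
    (tn * tp - fp * fn) / RabErr b (pn * (fp + tp)) (pp * (tn + fn)) := by
  rw [Rab_eq_noskill_add a b hps hn hp, add_sub_cancel_left, one_sub_Rab hden,
    div_div_div_cancel_right₀ hden]

lemma RabDen_aPrime_noskill {b : ℝ} (s t : ℝ) (hps : pn + pp = 1)
    (hq : pn ^ 2 * (1 - b) + pp ^ 2 * b ≠ 0) :
    RabDen (aPrime pn pp b) b (pn * s) (pn * t) (pp * s) (pp * t) =
      (pn * (1 - b) + pp * b) * RabErr b (pn * t) (pp * s) / (pn ^ 2 * (1 - b) + pp ^ 2 * b) := by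
  have ha' : aPrime pn pp b * (pn ^ 2 * (1 - b) + pp ^ 2 * b) = pn ^ 2 * (1 - b) :=
    div_mul_cancel₀ _ hq
  rw [eq_div_iff hq, RabDen, RabErr]
  linear_combination (pp * t - pn * s) * ha' +
    (pn + b * (pp - pn)) * ((1 - b) * (pn * t) + b * (pp * s)) * hps

lemma Rab_aPrime_noskill {b : ℝ} (s t : ℝ) (hps : pn + pp = 1)
    (hq : pn ^ 2 * (1 - b) + pp ^ 2 * b ≠ 0) (hc : pn * (1 - b) + pp * b ≠ 0)
    (he : RabErr b (pn * t) (pp * s) ≠ 0) :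
    Rab (aPrime pn pp b) b (pn * s) (pn * t) (pp * s) (pp * t) =
      pn * pp / (pn * (1 - b) + pp * b) := by
  have hden : RabDen (aPrime pn pp b) b (pn * s) (pn * t) (pp * s) (pp * t) ≠ 0 := by
    rw [RabDen_aPrime_noskill s t hps hq]
    exact div_ne_zero (mul_ne_zero hc he) hq
  rw [← sub_sub_cancel 1 (Rab _ _ _ _ _ _), one_sub_Rab hden, RabDen_aPrime_noskill s t hps hq]
  field_simp
  linear_combination (-(pn + b * (pp - pn))) * hps

lemma Rab_aPrime_eq {b : ℝ} (hps : pn + pp = 1) (hn : tn + fp = pn) (hp : fn + tp = pp)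
    (hq : pn ^ 2 * (1 - b) + pp ^ 2 * b ≠ 0) (hc : pn * (1 - b) + pp * b ≠ 0)
    (he : RabErr b (pn * (fp + tp)) (pp * (tn + fn)) ≠ 0) :
    Rab (aPrime pn pp b) b tn fp fn tp =
      (pn * pp + (pn ^ 2 * (1 - b) + pp ^ 2 * b) *
        ((tn * tp - fp * fn) / RabErr b (pn * (fp + tp)) (pp * (tn + fn)))) /
      (pn * (1 - b) + pp * b) := by
  rw [Rab_eq_noskill_add _ b hps hn hp, Rab_aPrime_noskill _ _ hps hq hc he,
    RabDen_aPrime_noskill _ _ hps hq]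
  field_simp

end Priors

lemma mul_one_sub_add_mul_pos {x y b : ℝ} (hx : 0 < x) (hy : 0 < y)
    (hb : b ∈ Set.Icc (0 : ℝ) 1) :
    0 < x * (1 - b) + y * b := by
  obtain ⟨hb0, hb1⟩ := hb
  rcases hb1.lt_or_eq with hb1 | rfl
  · exact add_pos_of_pos_of_nonneg (mul_pos hx (sub_pos.2 hb1)) (mul_nonneg hy.le hb0)
  · simpa using hy

theorem correctionForChance_rankCorrelated_general
    (pn pp : ℝ) (hpn : pn ∈ Set.Ioo (0:ℝ) 1) (hpp : pp ∈ Set.Ioo (0:ℝ) 1)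
    (hps : pn + pp = 1)
    (a b : ℝ) (hb : b ∈ Set.Icc (0:ℝ) 1)
    (tn₁ fp₁ fn₁ tp₁ : ℝ)
    (hpr₁n : tn₁ + fp₁ = pn) (hpr₁p : fn₁ + tp₁ = pp)
    (tn₂ fp₂ fn₂ tp₂ : ℝ)
    (hpr₂n : tn₂ + fp₂ = pn) (hpr₂p : fn₂ + tp₂ = pp)
    (hn₁ : RabDen a b (pn * (tn₁ + fn₁)) (pn * (fp₁ + tp₁))
        (pp * (tn₁ + fn₁)) (pp * (fp₁ + tp₁)) ≠ 0)
    (hn₂ : RabDen a b (pn * (tn₂ + fn₂)) (pn * (fp₂ + tp₂))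
        (pp * (tn₂ + fn₂)) (pp * (fp₂ + tp₂)) ≠ 0)
    (hne₁ : Rab a b (pn * (tn₁ + fn₁)) (pn * (fp₁ + tp₁))
        (pp * (tn₁ + fn₁)) (pp * (fp₁ + tp₁)) ≠ 1)
    (hne₂ : Rab a b (pn * (tn₂ + fn₂)) (pn * (fp₂ + tp₂))
        (pp * (tn₂ + fn₂)) (pp * (fp₂ + tp₂)) ≠ 1) :
    (Rab a b tn₁ fp₁ fn₁ tp₁ -
          Rab a b (pn * (tn₁ + fn₁)) (pn * (fp₁ + tp₁))
            (pp * (tn₁ + fn₁)) (pp * (fp₁ + tp₁))) /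
        (1 - Rab a b (pn * (tn₁ + fn₁)) (pn * (fp₁ + tp₁))
            (pp * (tn₁ + fn₁)) (pp * (fp₁ + tp₁))) ≤
      (Rab a b tn₂ fp₂ fn₂ tp₂ -
          Rab a b (pn * (tn₂ + fn₂)) (pn * (fp₂ + tp₂))
            (pp * (tn₂ + fn₂)) (pp * (fp₂ + tp₂))) /
        (1 - Rab a b (pn * (tn₂ + fn₂)) (pn * (fp₂ + tp₂))
            (pp * (tn₂ + fn₂)) (pp * (fp₂ + tp₂))) ↔
      Rab (aPrime pn pp b) b tn₁ fp₁ fn₁ tp₁ ≤ Rab (aPrime pn pp b) b tn₂ fp₂ fn₂ tp₂ := by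
  have hq := mul_one_sub_add_mul_pos (pow_pos hpn.1 2) (pow_pos hpp.1 2) hb
  have hc := mul_one_sub_add_mul_pos hpn.1 hpp.1 hb
  rw [chanceCorrected_eq a b hps hpr₁n hpr₁p hn₁, chanceCorrected_eq a b hps hpr₂n hpr₂p hn₂,
    Rab_aPrime_eq hps hpr₁n hpr₁p hq.ne' hc.ne' (RabErr_ne_zero_of_Rab_ne_one hn₁ hne₁),
    Rab_aPrime_eq hps hpr₂n hpr₂p hq.ne' hc.ne' (RabErr_ne_zero_of_Rab_ne_one hn₂ hne₂),
    div_le_div_iff_of_pos_right hc, add_le_add_iff_left, mul_le_mul_iff_right₀ hq]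

/-- Cohen-style correction for chance of `R_{a,b}`, for performances with fixed
priors `(π₋, π₊)`, yields a score perfectly rank-correlated with `R_{a',b'}`
where `a' = π₋²·(1-b)/(π₋²·(1-b) + π₊²·b)` and `b' = b`. -/
theorem correctionForChance_rankCorrelated
    (pn pp : ℝ) (hpn : pn ∈ Set.Ioo (0:ℝ) 1) (hpp : pp ∈ Set.Ioo (0:ℝ) 1)
    (hps : pn + pp = 1)
    (a b : ℝ) (ha : a ∈ Set.Icc (0:ℝ) 1) (hb : b ∈ Set.Icc (0:ℝ) 1)
    (tn₁ fp₁ fn₁ tp₁ : ℝ)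
    (htn₁ : 0 ≤ tn₁) (hfp₁ : 0 ≤ fp₁) (hfn₁ : 0 ≤ fn₁) (htp₁ : 0 ≤ tp₁)
    (hsum₁ : tn₁ + fp₁ + fn₁ + tp₁ = 1)
    (hpr₁n : tn₁ + fp₁ = pn) (hpr₁p : fn₁ + tp₁ = pp)
    (tn₂ fp₂ fn₂ tp₂ : ℝ)
    (htn₂ : 0 ≤ tn₂) (hfp₂ : 0 ≤ fp₂) (hfn₂ : 0 ≤ fn₂) (htp₂ : 0 ≤ tp₂)
    (hsum₂ : tn₂ + fp₂ + fn₂ + tp₂ = 1)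
    (hpr₂n : tn₂ + fp₂ = pn) (hpr₂p : fn₂ + tp₂ = pp)
    (hd₁ : RabDen a b tn₁ fp₁ fn₁ tp₁ ≠ 0)
    (hd₂ : RabDen a b tn₂ fp₂ fn₂ tp₂ ≠ 0)
    (hn₁ : RabDen a b (pn * (tn₁ + fn₁)) (pn * (fp₁ + tp₁))
        (pp * (tn₁ + fn₁)) (pp * (fp₁ + tp₁)) ≠ 0)
    (hn₂ : RabDen a b (pn * (tn₂ + fn₂)) (pn * (fp₂ + tp₂))
        (pp * (tn₂ + fn₂)) (pp * (fp₂ + tp₂)) ≠ 0)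
    (hne₁ : Rab a b (pn * (tn₁ + fn₁)) (pn * (fp₁ + tp₁))
        (pp * (tn₁ + fn₁)) (pp * (fp₁ + tp₁)) ≠ 1)
    (hne₂ : Rab a b (pn * (tn₂ + fn₂)) (pn * (fp₂ + tp₂))
        (pp * (tn₂ + fn₂)) (pp * (fp₂ + tp₂)) ≠ 1)
    (hd₁' : RabDen (aPrime pn pp b) b tn₁ fp₁ fn₁ tp₁ ≠ 0)
    (hd₂' : RabDen (aPrime pn pp b) b tn₂ fp₂ fn₂ tp₂ ≠ 0) :
    (Rab a b tn₁ fp₁ fn₁ tp₁ -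
          Rab a b (pn * (tn₁ + fn₁)) (pn * (fp₁ + tp₁))
            (pp * (tn₁ + fn₁)) (pp * (fp₁ + tp₁))) /
        (1 - Rab a b (pn * (tn₁ + fn₁)) (pn * (fp₁ + tp₁))
            (pp * (tn₁ + fn₁)) (pp * (fp₁ + tp₁))) ≤
      (Rab a b tn₂ fp₂ fn₂ tp₂ -
          Rab a b (pn * (tn₂ + fn₂)) (pn * (fp₂ + tp₂))
            (pp * (tn₂ + fn₂)) (pp * (fp₂ + tp₂))) /
        (1 - Rab a b (pn * (tn₂ + fn₂)) (pn * (fp₂ + tp₂))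
            (pp * (tn₂ + fn₂)) (pp * (fp₂ + tp₂))) ↔
      Rab (aPrime pn pp b) b tn₁ fp₁ fn₁ tp₁ ≤ Rab (aPrime pn pp b) b tn₂ fp₂ fn₂ tp₂ :=
  correctionForChance_rankCorrelated_general pn pp hpn hpp hps a b hb tn₁ fp₁ fn₁ tp₁ hpr₁n hpr₁p
    tn₂ fp₂ fn₂ tp₂ hpr₂n hpr₂p hn₁ hn₂ hne₁ hne₂
end

section
/- Let P₁ = (tn₁, fp₁, fn₁, tp₁) and P₂ = (tn₂, fp₂, fn₂, tp₂) be two-class classification performances with balanced priors, i.e., tn_i + fp_i = 1/2 and fn_i + tp_i = 1/2 for i = 1, 2. Define TNR_i = 2·tn_i, FPR_i = 2·fp_i, FNR_i = 2·fn_i, TPR_i = 2·tp_i, and set λ_a = FPR₁·FNR₂ − FNR₁·FPR₂, λ_b = TPR₁·TNR₂ − TNR₁·TPR₂, λ₀ = TNR₁ − TNR₂. Then for all a, b ∈ [0,1] such that the denominators of R_{a,b} at both P₁ and P₂ are strictly positive, R_{a,b}(P₁) ≥ R_{a,b}(P₂) if and only if λ_a·a + λ_b·b + λ₀ ≥ 0.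 Consequently, the region of the Tile where P₁ is better or equivalent to P₂ is the intersection of [0,1]² with a half-plane. -/
/-- For two performances with balanced priors, the set of canonical importances
`(a, b)` for which `P₁` is better than or equivalent to `P₂` is given by a
linear inequality `λ_a·a + λ_b·b + λ₀ ≥ 0`, hence is the intersection of the
Tile `[0,1]²` with a half-plane. -/
theorem tile_betterRegion_halfPlane
    (tn₁ fp₁ fn₁ tp₁ tn₂ fp₂ fn₂ tp₂ : ℝ)
    (htn₁ : 0 ≤ tn₁) (hfp₁ : 0 ≤ fp₁) (hfn₁ : 0 ≤ fn₁) (htp₁ : 0 ≤ tp₁)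
    (htn₂ : 0 ≤ tn₂) (hfp₂ : 0 ≤ fp₂) (hfn₂ : 0 ≤ fn₂) (htp₂ : 0 ≤ tp₂)
    (hb₁n : tn₁ + fp₁ = 1 / 2) (hb₁p : fn₁ + tp₁ = 1 / 2)
    (hb₂n : tn₂ + fp₂ = 1 / 2) (hb₂p : fn₂ + tp₂ = 1 / 2)
    (a b : ℝ) (ha : a ∈ Set.Icc (0:ℝ) 1) (hb : b ∈ Set.Icc (0:ℝ) 1)
    (hd₁ : 0 < RabDen a b tn₁ fp₁ fn₁ tp₁)
    (hd₂ : 0 < RabDen a b tn₂ fp₂ fn₂ tp₂) :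
    Rab a b tn₁ fp₁ fn₁ tp₁ ≥ Rab a b tn₂ fp₂ fn₂ tp₂ ↔
      ((2 * fp₁) * (2 * fn₂) - (2 * fn₁) * (2 * fp₂)) * a +
          ((2 * tp₁) * (2 * tn₂) - (2 * tn₁) * (2 * tp₂)) * b +
          (2 * tn₁ - 2 * tn₂) ≥ 0 := by
  have hd₁' : (0:ℝ) < (1 - a) * tn₁ + (1 - b) * fp₁ + b * fn₁ + a * tp₁ := hd₁
  have hd₂' : (0:ℝ) < (1 - a) * tn₂ + (1 - b) * fp₂ + b * fn₂ + a * tp₂ := hd₂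
  rw [Rab, Rab, ge_iff_le, div_le_div_iff₀ hd₂' hd₁']
  have key : ((1 - a) * tn₁ + a * tp₁) * ((1 - a) * tn₂ + (1 - b) * fp₂ + b * fn₂ + a * tp₂)
      - ((1 - a) * tn₂ + a * tp₂) * ((1 - a) * tn₁ + (1 - b) * fp₁ + b * fn₁ + a * tp₁)
      = (((2 * fp₁) * (2 * fn₂) - (2 * fn₁) * (2 * fp₂)) * a +
          ((2 * tp₁) * (2 * tn₂) - (2 * tn₁) * (2 * tp₂)) * b +
          (2 * tn₁ - 2 * tn₂)) / 4 := by
    have h1 : fp₁ = 1 / 2 - tn₁ := by linarith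
    have h2 : tp₁ = 1 / 2 - fn₁ := by linarith
    have h3 : fp₂ = 1 / 2 - tn₂ := by linarith
    have h4 : tp₂ = 1 / 2 - fn₂ := by linarith
    subst h1 h2 h3 h4; ring
  constructor <;> intro h <;> nlinarith [key]
end

section
/- Let I be an importance, let P₁ and P₂ be two-class classification performances at which the ranking score R_I is defined, and let t ∈ [0,1]. Then R_I is defined at the convex combination t·P₁ + (1−t)·P₂ (componentwise), and min(R_I(P₁), R_I(P₂)) ≤ R_I(t·P₁ + (1−t)·P₂) ≤ max(R_I(P₁), R_I(P₂)); that is, a convex combination of performances cannot be better than the best of the combined performances nor worse than the worst of them, according to any ranking score. -/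
lemma mediant_bounds (N₁ N₂ D₁ D₂ t : ℝ) (hD₁ : 0 < D₁) (hD₂ : 0 < D₂)
    (ht0 : 0 ≤ t) (ht1 : t ≤ 1) :
    min (N₁ / D₁) (N₂ / D₂) ≤ (t * N₁ + (1 - t) * N₂) / (t * D₁ + (1 - t) * D₂) ∧
    (t * N₁ + (1 - t) * N₂) / (t * D₁ + (1 - t) * D₂) ≤ max (N₁ / D₁) (N₂ / D₂) := by
  have ht1' : 0 ≤ 1 - t := by linarith
  have hD : 0 < t * D₁ + (1 - t) * D₂ := by
    rcases eq_or_lt_of_le ht0 with h | h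
    · simp [← h]; linarith
    · have := mul_pos h hD₁
      nlinarith [mul_nonneg ht1' hD₂.le]
  constructor
  · rw [le_div_iff₀ hD]
    have h₁ : min (N₁ / D₁) (N₂ / D₂) * D₁ ≤ N₁ :=
      (le_div_iff₀ hD₁).mp (min_le_left _ _)
    have h₂ : min (N₁ / D₁) (N₂ / D₂) * D₂ ≤ N₂ :=
      (le_div_iff₀ hD₂).mp (min_le_right _ _)
    nlinarith [mul_le_mul_of_nonneg_left h₁ ht0, mul_le_mul_of_nonneg_left h₂ ht1']
  · rw [div_le_iff₀ hD]
    have h₁ : N₁ ≤ max (N₁ / D₁) (N₂ / D₂) * D₁ :=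
      (div_le_iff₀ hD₁).mp (le_max_left _ _)
    have h₂ : N₂ ≤ max (N₁ / D₁) (N₂ / D₂) * D₂ :=
      (div_le_iff₀ hD₂).mp (le_max_right _ _)
    nlinarith [mul_le_mul_of_nonneg_left h₁ ht0, mul_le_mul_of_nonneg_left h₂ ht1']

/-- A convex combination of performances cannot be better than the best of the
combined performances and cannot be worse than the worst of them, according to
any ranking score. -/
theorem rankingScore_convexCombination
    (itn ifp ifn itp : ℝ)
    (hitn : 0 ≤ itn) (hifp : 0 ≤ ifp) (hifn : 0 ≤ ifn) (hitp : 0 ≤ itp)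
    (hI1 : itn + itp ≠ 0) (hI2 : ifp + ifn ≠ 0)
    (tn₁ fp₁ fn₁ tp₁ : ℝ)
    (htn₁ : 0 ≤ tn₁) (hfp₁ : 0 ≤ fp₁) (hfn₁ : 0 ≤ fn₁) (htp₁ : 0 ≤ tp₁)
    (hsum₁ : tn₁ + fp₁ + fn₁ + tp₁ = 1)
    (tn₂ fp₂ fn₂ tp₂ : ℝ)
    (htn₂ : 0 ≤ tn₂) (hfp₂ : 0 ≤ fp₂) (hfn₂ : 0 ≤ fn₂) (htp₂ : 0 ≤ tp₂)
    (hsum₂ : tn₂ + fp₂ + fn₂ + tp₂ = 1)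
    (hd₁ : RIDen itn ifp ifn itp tn₁ fp₁ fn₁ tp₁ ≠ 0)
    (hd₂ : RIDen itn ifp ifn itp tn₂ fp₂ fn₂ tp₂ ≠ 0)
    (t : ℝ) (ht : t ∈ Set.Icc (0:ℝ) 1) :
    RIDen itn ifp ifn itp (t * tn₁ + (1 - t) * tn₂) (t * fp₁ + (1 - t) * fp₂)
        (t * fn₁ + (1 - t) * fn₂) (t * tp₁ + (1 - t) * tp₂) ≠ 0 ∧
      min (RI itn ifp ifn itp tn₁ fp₁ fn₁ tp₁) (RI itn ifp ifn itp tn₂ fp₂ fn₂ tp₂) ≤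
        RI itn ifp ifn itp (t * tn₁ + (1 - t) * tn₂) (t * fp₁ + (1 - t) * fp₂)
          (t * fn₁ + (1 - t) * fn₂) (t * tp₁ + (1 - t) * tp₂) ∧
      RI itn ifp ifn itp (t * tn₁ + (1 - t) * tn₂) (t * fp₁ + (1 - t) * fp₂)
          (t * fn₁ + (1 - t) * fn₂) (t * tp₁ + (1 - t) * tp₂) ≤
        max (RI itn ifp ifn itp tn₁ fp₁ fn₁ tp₁) (RI itn ifp ifn itp tn₂ fp₂ fn₂ tp₂) := by
  obtain ⟨ht0, ht1⟩ := ht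
  have hD₁pos : 0 < RIDen itn ifp ifn itp tn₁ fp₁ fn₁ tp₁ := by
    rcases lt_or_eq_of_le (by unfold RIDen; positivity : (0:ℝ) ≤ RIDen itn ifp ifn itp tn₁ fp₁ fn₁ tp₁) with h | h
    · exact h
    · exact absurd h.symm hd₁
  have hD₂pos : 0 < RIDen itn ifp ifn itp tn₂ fp₂ fn₂ tp₂ := by
    rcases lt_or_eq_of_le (by unfold RIDen; positivity : (0:ℝ) ≤ RIDen itn ifp ifn itp tn₂ fp₂ fn₂ tp₂) with h | h
    · exact h
    · exact absurd h.symm hd₂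
  have hDeq : RIDen itn ifp ifn itp (t * tn₁ + (1 - t) * tn₂) (t * fp₁ + (1 - t) * fp₂)
      (t * fn₁ + (1 - t) * fn₂) (t * tp₁ + (1 - t) * tp₂)
      = t * RIDen itn ifp ifn itp tn₁ fp₁ fn₁ tp₁ + (1 - t) * RIDen itn ifp ifn itp tn₂ fp₂ fn₂ tp₂ := by
    simp only [RIDen]; ring
  have hNeq : itn * (t * tn₁ + (1 - t) * tn₂) + itp * (t * tp₁ + (1 - t) * tp₂)
      = t * (itn * tn₁ + itp * tp₁) + (1 - t) * (itn * tn₂ + itp * tp₂) := by ring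
  have key := mediant_bounds (itn * tn₁ + itp * tp₁) (itn * tn₂ + itp * tp₂)
    (RIDen itn ifp ifn itp tn₁ fp₁ fn₁ tp₁) (RIDen itn ifp ifn itp tn₂ fp₂ fn₂ tp₂)
    t hD₁pos hD₂pos ht0 ht1
  have hDpos : 0 < t * RIDen itn ifp ifn itp tn₁ fp₁ fn₁ tp₁ + (1 - t) * RIDen itn ifp ifn itp tn₂ fp₂ fn₂ tp₂ := by
    rcases eq_or_lt_of_le ht0 with h | h
    · simp [← h]; linarith
    · nlinarith [mul_nonneg (by linarith : (0:ℝ) ≤ 1 - t) hD₂pos.le]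
  refine ⟨by rw [hDeq]; exact hDpos.ne', ?_, ?_⟩
  · simp only [RI, RIDen] at key ⊢
    rw [hNeq, show itn * (t * tn₁ + (1 - t) * tn₂) + ifp * (t * fp₁ + (1 - t) * fp₂) +
        ifn * (t * fn₁ + (1 - t) * fn₂) + itp * (t * tp₁ + (1 - t) * tp₂)
        = t * (itn * tn₁ + ifp * fp₁ + ifn * fn₁ + itp * tp₁)
          + (1 - t) * (itn * tn₂ + ifp * fp₂ + ifn * fn₂ + itp * tp₂) from by ring]
    exact key.1
  · simp only [RI, RIDen] at key ⊢
    rw [hNeq, show itn * (t * tn₁ + (1 - t) * tn₂) + ifp * (t * fp₁ + (1 - t) * fp₂) +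
        ifn * (t * fn₁ + (1 - t) * fn₂) + itp * (t * tp₁ + (1 - t) * tp₂)
        = t * (itn * tn₁ + ifp * fp₁ + ifn * fn₁ + itp * tp₁)
          + (1 - t) * (itn * tn₂ + ifp * fp₂ + ifn * fn₂ + itp * tp₂) from by ring]
    exact key.2
end

section
/- Let P = (tn, fp, fn, tp) be a two-class classification performance such that tp ≠ tn, fn ≠ fp, and the four sums tn + fp, tn + fn, tp + fp, tp + fn are all strictly positive. Then the double integral VUT(P) = ∫₀¹ ∫₀¹ R_{a,b}(P) db da exists and equals 1/2 − (1 / (2·(tp − tn)·(fn − fp))) · [ (tn² − fn²)·ln(tn + fn) + (tp² − fp²)·ln(tp + fp) + (fp² − tn²)·ln(fp + tn) + (fn² − tp²)·ln(fn + tp) ]. -/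
/-! For fixed `a`, the score is `N / (N + fp + (fn - fp) * b)` with `N = (1 - a) * tn + a * tp`,
whose `b`-integral is `N * (log (N + fn) - log (N + fp)) / (fn - fp)`. Substituting `u = N`, the
`a`-integral becomes `∫ u in tn..tp, u * (log (u + fn) - log (u + fp))` divided by
`(tp - tn) * (fn - fp)`, and `u * log (u + k)` has an elementary antiderivative. Integrability on the square holds
because the denominator of `R_{a,b}` is a convex combination of the four positive sums. -/

open MeasureTheory

open Real Set intervalIntegral

lemma convexCombination_pos {x y t : ℝ} (hx : 0 < x) (hy : 0 < y) (ht : t ∈ Icc (0 : ℝ) 1) :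
    0 < (1 - t) * x + t * y := by
  simpa [smul_eq_mul] using convex_Ioi (0 : ℝ) hx hy (sub_nonneg.2 ht.2) ht.1 (by ring)

lemma Rab_eq_div (a b tn fp fn tp : ℝ) :
    Rab a b tn fp fn tp =
      ((1 - a) * tn + a * tp) / ((fn - fp) * b + ((1 - a) * tn + a * tp + fp)) := by
  unfold Rab; congr 1; ring

lemma Rab_denom_pos {a b tn fp fn tp : ℝ} (ha : a ∈ Icc (0 : ℝ) 1) (hb : b ∈ Icc (0 : ℝ) 1)
    (hs₁ : 0 < tn + fp) (hs₂ : 0 < tn + fn) (hs₃ : 0 < tp + fp) (hs₄ : 0 < tp + fn) :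
    0 < (1 - a) * tn + (1 - b) * fp + b * fn + a * tp := by
  have hfp := convexCombination_pos hs₁ hs₃ ha
  have hfn := convexCombination_pos hs₂ hs₄ ha
  have := convexCombination_pos hfp hfn hb
  linarith

lemma integral_div_affine (N : ℝ) {c p : ℝ} (hc : c ≠ 0) (hp : 0 < p) (hcp : 0 < c + p) :
    ∫ b in (0 : ℝ)..1, N / (c * b + p) = N * (log (c + p) - log p) / c := by
  simp_rw [div_eq_mul_inv N, intervalIntegral.integral_const_mul]
  rw [integral_comp_mul_add (fun x => x⁻¹) hc, mul_zero, zero_add, mul_one,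
    integral_inv_of_pos hp hcp, log_div hcp.ne' hp.ne', smul_eq_mul]
  ring

noncomputable def mulLogAddPrimitive (k u : ℝ) : ℝ :=
  (u ^ 2 - k ^ 2) / 2 * log (u + k) - u ^ 2 / 4 + k * u / 2

lemma hasDerivAt_mulLogAddPrimitive {k u : ℝ} (h : 0 < u + k) :
    HasDerivAt (mulLogAddPrimitive k) (u * log (u + k)) u := by
  have hlog := ((hasDerivAt_id u).add_const k).log h.ne'
  have hmain := ((((hasDerivAt_pow 2 u).sub_const (k ^ 2)).div_const 2).mul hlog).sub
    ((hasDerivAt_pow 2 u).div_const 4) |>.add (((hasDerivAt_id u).const_mul k).div_const 2)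
  refine hmain.congr_deriv ?_
  simp only [id_eq, Nat.cast_ofNat]
  field_simp
  ring

lemma add_pos_of_mem_uIcc {x y k u : ℝ} (hx : 0 < x + k) (hy : 0 < y + k) (hu : u ∈ uIcc x y) :
    0 < u + k := by
  rcases mem_uIcc.1 hu with h | h <;> linarith [h.1]

lemma intervalIntegrable_mul_log_add {k x y : ℝ} (hx : 0 < x + k) (hy : 0 < y + k) :
    IntervalIntegrable (fun u => u * log (u + k)) volume x y :=
  ContinuousOn.intervalIntegrable <| continuousOn_id.mul <|
    (continuousOn_id.add continuousOn_const).log fun _ hu => (add_pos_of_mem_uIcc hx hy hu).ne'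

lemma integral_mul_log_add {k x y : ℝ} (hx : 0 < x + k) (hy : 0 < y + k) :
    ∫ u in x..y, u * log (u + k) = mulLogAddPrimitive k y - mulLogAddPrimitive k x :=
  integral_eq_sub_of_hasDerivAt
    (fun _ hu => hasDerivAt_mulLogAddPrimitive (add_pos_of_mem_uIcc hx hy hu))
    (intervalIntegrable_mul_log_add hx hy)

lemma integral_mul_log_sub_log {k l x y : ℝ} (hxk : 0 < x + k) (hyk : 0 < y + k)
    (hxl : 0 < x + l) (hyl : 0 < y + l) :
    ∫ u in x..y, u * (log (u + k) - log (u + l)) =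
      mulLogAddPrimitive k y - mulLogAddPrimitive k x -
        (mulLogAddPrimitive l y - mulLogAddPrimitive l x) := by
  simp_rw [mul_sub]
  rw [integral_sub (intervalIntegrable_mul_log_add hxk hyk) (intervalIntegrable_mul_log_add hxl hyl),
    integral_mul_log_add hxk hyk, integral_mul_log_add hxl hyl]

lemma integral_comp_convexCombination (f : ℝ → ℝ) {x y : ℝ} (hxy : x ≠ y) :
    ∫ a in (0 : ℝ)..1, f ((1 - a) * x + a * y) = (∫ u in x..y, f u) / (y - x) := by
  have hyx : y - x ≠ 0 := sub_ne_zero.2 hxy.symm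
  have haffine : ∀ a : ℝ, (1 - a) * x + a * y = (y - x) * a + x := fun a => by ring
  simp_rw [haffine]
  rw [integral_comp_mul_add f hyx, mul_zero, zero_add, mul_one, sub_add_cancel, smul_eq_mul,
    inv_mul_eq_div]

theorem volumeUnderTile_closedForm_general
    (tn fp fn tp : ℝ)
    (h₁ : tp ≠ tn) (h₂ : fn ≠ fp)
    (hs₁ : 0 < tn + fp) (hs₂ : 0 < tn + fn) (hs₃ : 0 < tp + fp) (hs₄ : 0 < tp + fn) :
    IntegrableOn (fun q : ℝ × ℝ => Rab q.1 q.2 tn fp fn tp)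
        (Set.Icc (0:ℝ) 1 ×ˢ Set.Icc (0:ℝ) 1) volume ∧
      (∫ a in (0:ℝ)..1, ∫ b in (0:ℝ)..1, Rab a b tn fp fn tp) =
        1 / 2 - (1 / (2 * (tp - tn) * (fn - fp))) *
          ((tn ^ 2 - fn ^ 2) * Real.log (tn + fn) +
            (tp ^ 2 - fp ^ 2) * Real.log (tp + fp) +
            (fp ^ 2 - tn ^ 2) * Real.log (fp + tn) +
            (fn ^ 2 - tp ^ 2) * Real.log (fn + tp)) := by
  refine ⟨(ContinuousOn.div (by fun_prop) (by fun_prop) fun q hq =>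
    (Rab_denom_pos hq.1 hq.2 hs₁ hs₂ hs₃ hs₄).ne').integrableOn_compact
      (isCompact_Icc.prod isCompact_Icc), ?_⟩
  have hinner : ∀ a ∈ uIcc (0 : ℝ) 1, ∫ b in (0 : ℝ)..1, Rab a b tn fp fn tp =
      ((1 - a) * tn + a * tp) * (log ((1 - a) * tn + a * tp + fn) -
        log ((1 - a) * tn + a * tp + fp)) / (fn - fp) := by
    intro a ha
    rw [uIcc_of_le zero_le_one] at ha
    simp_rw [Rab_eq_div]
    have hfp : 0 < (1 - a) * tn + a * tp + fp := by linarith [convexCombination_pos hs₁ hs₃ ha]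
    have hfn : 0 < (1 - a) * tn + a * tp + fn := by linarith [convexCombination_pos hs₂ hs₄ ha]
    rw [integral_div_affine _ (sub_ne_zero.2 h₂) hfp (by linarith)]
    ring_nf
  calc ∫ a in (0 : ℝ)..1, ∫ b in (0 : ℝ)..1, Rab a b tn fp fn tp
      = (∫ u in tn..tp, u * (log (u + fn) - log (u + fp)) / (fn - fp)) / (tp - tn) :=
        (integral_congr hinner).trans <|
          integral_comp_convexCombination (fun u => u * (log (u + fn) - log (u + fp)) / (fn - fp)) h₁.symm
    _ = _ := by
        rw [intervalIntegral.integral_div, integral_mul_log_sub_log hs₂ hs₄ hs₁ hs₃]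
        unfold mulLogAddPrimitive
        rw [add_comm fp tn, add_comm fn tp]
        field_simp
        ring

/-- Closed-form expression of the Volume Under Tile
`VUT(P) = ∫₀¹ ∫₀¹ R_{a,b}(P) db da` when `tp ≠ tn` and `fn ≠ fp`. -/
theorem volumeUnderTile_closedForm
    (tn fp fn tp : ℝ) (htn : 0 ≤ tn) (hfp : 0 ≤ fp) (hfn : 0 ≤ fn) (htp : 0 ≤ tp)
    (hsum : tn + fp + fn + tp = 1)
    (h₁ : tp ≠ tn) (h₂ : fn ≠ fp)
    (hs₁ : 0 < tn + fp) (hs₂ : 0 < tn + fn) (hs₃ : 0 < tp + fp) (hs₄ : 0 < tp + fn) :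
    IntegrableOn (fun q : ℝ × ℝ => Rab q.1 q.2 tn fp fn tp)
        (Set.Icc (0:ℝ) 1 ×ˢ Set.Icc (0:ℝ) 1) volume ∧
      (∫ a in (0:ℝ)..1, ∫ b in (0:ℝ)..1, Rab a b tn fp fn tp) =
        1 / 2 - (1 / (2 * (tp - tn) * (fn - fp))) *
          ((tn ^ 2 - fn ^ 2) * Real.log (tn + fn) +
            (tp ^ 2 - fp ^ 2) * Real.log (tp + fp) +
            (fp ^ 2 - tn ^ 2) * Real.log (fp + tn) +
            (fn ^ 2 - tp ^ 2) * Real.log (fn + tp)) :=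
  volumeUnderTile_closedForm_general tn fp fn tp h₁ h₂ hs₁ hs₂ hs₃ hs₄
end
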